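/- arXiv:2106.15955 — 6 statements merged into one kernel-verified Lean document; each statement's English description precedes it below -/
import Mathlib

section
/- Let φ be a strictly convex norm on ℝⁿ, K ⊆ ℝⁿ closed, a ∈ K, u with φ(u) = 1, and t > 0 with δ_K^φ(a + t u) = t. Then for every 0 < s < t, the set of φ-nearest points of a + s u in K is exactly the singleton {a}. -/
open Set Filter Metric MeasureTheory Topology ENNReal

noncomputable section

abbrev Euc (n : ℕ) := EuclideanSpace ℝ (Fin n)

def IsNorm {n : ℕ} (φ : Euc n → ℝ) : Prop :=
  (∀ x, φ x = 0 ↔ x = 0) ∧ (∀ (c : ℝ) (x : Euc n), φ (c • x) = |c| * φ x) ∧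
    (∀ x y, φ (x + y) ≤ φ x + φ y)

def StrictlyConvexNorm {n : ℕ} (φ : Euc n → ℝ) : Prop :=
  IsNorm φ ∧ ∀ a b, φ (a + b) = φ a + φ b → φ b • a = φ a • b

def UniformlyConvexNorm {n : ℕ} (φ : Euc n → ℝ) : Prop :=
  IsNorm φ ∧ ∃ γ : ℝ, 0 < γ ∧ ConvexOn ℝ Set.univ (fun x => φ x - γ * ‖x‖)

def distφ {n : ℕ} (φ : Euc n → ℝ) (K : Set (Euc n)) (x : Euc n) : ℝ :=
  sInf {r | ∃ y ∈ K, r = φ (x - y)}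

def nearφ {n : ℕ} (φ : Euc n → ℝ) (K : Set (Euc n)) (x : Euc n) : Set (Euc n) :=
  {a ∈ K | φ (x - a) = distφ φ K x}

def rhoφ {n : ℕ} (φ : Euc n → ℝ) (K : Set (Euc n)) (x : Euc n) : ℝ≥0∞ :=
  sSup {r : ℝ≥0∞ | ∃ s : ℝ, ∃ a ∈ nearφ φ K x,
    r = ENNReal.ofReal s ∧ distφ φ K (a + s • (x - a)) = s * distφ φ K x}

def normalBundle {n : ℕ} (φ : Euc n → ℝ) (K : Set (Euc n)) : Set (Euc n × Euc n) :=
  {p | p.1 ∈ K ∧ φ p.2 = 1 ∧ ∃ s : ℝ, 0 < s ∧ distφ φ K (p.1 + s • p.2) = s}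

def reachφ {n : ℕ} (φ : Euc n → ℝ) (K : Set (Euc n)) (p : Euc n × Euc n) : ℝ≥0∞ :=
  sSup {r : ℝ≥0∞ | ∃ s : ℝ, 0 < s ∧ r = ENNReal.ofReal s ∧ distφ φ K (p.1 + s • p.2) = s}

def cutLocus {n : ℕ} (φ : Euc n → ℝ) (K : Set (Euc n)) : Set (Euc n) :=
  {x | ∃ p ∈ normalBundle φ K, reachφ φ K p ≠ ⊤ ∧
    x = p.1 + (reachφ φ K p).toReal • p.2}

def PtTwiceDiffAt {n : ℕ} (f : Euc n → ℝ) (x : Euc n) : Prop :=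
  ∃ (L : Euc n →L[ℝ] ℝ) (Q : Euc n →L[ℝ] Euc n →L[ℝ] ℝ),
    Tendsto (fun y => |f y - f x - L (y - x) - Q (y - x) (y - x)| / ‖y - x‖ ^ 2)
      (𝓝[≠] x) (𝓝 0)

theorem stmt2 {n : ℕ} (φ : Euc n → ℝ) (hφ : StrictlyConvexNorm φ) (K : Set (Euc n))
    (hK : IsClosed K) (a u : Euc n) (ha : a ∈ K) (hu : φ u = 1)
    (t : ℝ) (ht : 0 < t) (hd : distφ φ K (a + t • u) = t) :
    ∀ s : ℝ, 0 < s → s < t → nearφ φ K (a + s • u) = {a} := by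
  obtain ⟨⟨hz, hhom, htri⟩, hsc⟩ := hφ
  have hnonneg : ∀ x, 0 ≤ φ x := by
    intro x
    have h0 : φ 0 = 0 := (hz 0).2 rfl
    have := htri x (-x)
    have hneg : φ (-x) = φ x := by
      have := hhom (-1) x
      simpa using this
    simp only [add_neg_cancel, h0, hneg] at this
    linarith
  have hbdd : ∀ x : Euc n, BddBelow {r | ∃ y ∈ K, r = φ (x - y)} := by
    intro x
    exact ⟨0, fun r ⟨y, _, hr⟩ => hr ▸ hnonneg _⟩
  have hmem : ∀ (x b : Euc n), b ∈ K → distφ φ K x ≤ φ (x - b) := by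
    intro x b hb
    exact csInf_le (hbdd x) ⟨b, hb, rfl⟩
  intro s hs hst
  -- key: for any b ∈ K, t ≤ φ(a + t•u - b)
  have hxb : ∀ b ∈ K, t ≤ φ (a + t • u - b) := by
    intro b hb
    have h := hmem (a + t • u) b hb
    rwa [hd] at h
  have hsu : φ (s • u) = s := by
    rw [hhom, hu, abs_of_pos hs, mul_one]
  have htsu : φ ((t - s) • u) = t - s := by
    rw [hhom, hu, abs_of_pos (by linarith), mul_one]
  -- dist at a + s•u equals s
  have hds : distφ φ K (a + s • u) = s := by
    apply le_antisymm
    · have := hmem (a + s • u) a ha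
      simpa [hsu] using this
    · refine le_csInf ⟨φ (a + s • u - a), a, ha, rfl⟩ ?_
      rintro r ⟨b, hb, rfl⟩
      have h1 := hxb b hb
      have h2 : φ (a + t • u - b) ≤ φ ((t - s) • u) + φ (a + s • u - b) := by
        have := htri ((t - s) • u) (a + s • u - b)
        have he : (t - s) • u + (a + s • u - b) = a + t • u - b := by
          rw [sub_smul]; abel
        rwa [he] at this
      rw [htsu] at h2
      linarith
  ext b
  simp only [nearφ, Set.mem_setOf_eq, Set.mem_singleton_iff]
  constructor
  · rintro ⟨hb, hfb⟩
    rw [hds] at hfb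
    -- equality in triangle
    have he : (t - s) • u + (a + s • u - b) = a + t • u - b := by
      rw [sub_smul]; abel
    have h1 := hxb b hb
    have h2 : φ ((t - s) • u + (a + s • u - b)) ≤ φ ((t - s) • u) + φ (a + s • u - b) :=
      htri _ _
    rw [he, htsu, hfb] at h2
    have heq : φ ((t - s) • u + (a + s • u - b)) =
        φ ((t - s) • u) + φ (a + s • u - b) := by
      rw [he, htsu, hfb]
      linarith [htri ((t - s) • u) (a + s • u - b)]
    have := hsc _ _ heq
    rw [htsu, hfb] at this
    -- s • ((t-s) • u) = (t-s) • (a + s•u - b)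
    have hts : (0:ℝ) < t - s := by linarith
    have : (t - s) • (s • u) = (t - s) • (a + s • u - b) := by
      rw [smul_comm] at this
      exact this
    have h3 : s • u = a + s • u - b := smul_right_injective _ (ne_of_gt hts) this
    have : b = a := by
      have := h3
      rw [eq_sub_iff_add_eq] at this
      have : b = a + s • u - s • u := by rw [← this]; abel
      simpa using this
    exact this
  · rintro rfl
    refine ⟨ha, ?_⟩
    rw [hds]
    simpa using hsu
end
end

section
/- For every closed set K ⊆ ℝⁿ and norm φ, the reach function r_K^φ : N^φ(K) → (0, +∞] is upper semicontinuous on N^φ(K): if (a_i, u_i) ∈ N^φ(K) converge to (a, u) ∈ N^φ(K), then limsup r_K^φ(a_i, u_i) ≤ r_K^φ(a, u). -/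
open Set Filter Metric MeasureTheory Topology ENNReal

noncomputable section

/-! Along a ray from `a ∈ K` in a unit direction `u`, the equation `distφ φ K (a + t • u) = t`
holds on an initial interval of times, whose length is the reach. So if the reaches at
`(aᵢ, uᵢ)` frequently exceed `t`, then `distφ φ K (aᵢ + t • uᵢ) = t` frequently, and since the
distance function is continuous (even Lipschitz, as `φ` is dominated by the Euclidean norm),
the equation passes to the limit `(a₀, u₀)`, giving `reachφ φ K (a₀, u₀) ≥ t`. -/

namespace IsNorm

variable {n : ℕ} {φ : Euc n → ℝ}

def toSeminorm (hφ : IsNorm φ) : Seminorm ℝ (Euc n) :=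
  Seminorm.of φ hφ.2.2 fun c x => by rw [Real.norm_eq_abs]; exact hφ.2.1 c x

lemma nonneg (hφ : IsNorm φ) (x : Euc n) : 0 ≤ φ x :=
  apply_nonneg hφ.toSeminorm x

lemma exists_le_mul_norm (hφ : IsNorm φ) : ∃ C, 0 < C ∧ ∀ x, φ x ≤ C * ‖x‖ :=
  Seminorm.bound_of_continuous_normedSpace hφ.toSeminorm
    hφ.toSeminorm.convexOn.locallyLipschitz.continuous

end IsNorm

section distφ

variable {n : ℕ} {φ : Euc n → ℝ} {K : Set (Euc n)}

lemma distφ_le (hφ : IsNorm φ) (x : Euc n) {y : Euc n} (hy : y ∈ K) :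
    distφ φ K x ≤ φ (x - y) :=
  csInf_le ⟨0, fun _ ⟨_, _, hr⟩ => hr ▸ hφ.nonneg _⟩ ⟨y, hy, rfl⟩

lemma distφ_le_add (hφ : IsNorm φ) (hK : K.Nonempty) (x y : Euc n) :
    distφ φ K x ≤ distφ φ K y + φ (x - y) := by
  suffices distφ φ K x - φ (x - y) ≤ distφ φ K y by linarith
  obtain ⟨z₀, hz₀⟩ := hK
  refine le_csInf ⟨_, z₀, hz₀, rfl⟩ fun r ⟨z, hz, hr⟩ => ?_
  have := hφ.2.2 (x - y) (y - z)
  rw [sub_add_sub_cancel] at this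
  linarith [distφ_le hφ x hz]

lemma continuous_distφ (hφ : IsNorm φ) (K : Set (Euc n)) : Continuous (distφ φ K) := by
  rcases K.eq_empty_or_nonempty with rfl | hK
  · have h : distφ φ ∅ = fun _ => 0 := by funext x; simp [distφ]
    exact h ▸ continuous_const
  obtain ⟨C, -, hC⟩ := hφ.exists_le_mul_norm
  refine (LipschitzWith.of_le_add_mul' C fun x y => ?_).continuous
  rw [dist_eq_norm]
  exact (distφ_le_add hφ hK x y).trans (add_le_add_right (hC _) _)

lemma distφ_add_smul_of_le (hφ : IsNorm φ) {a u : Euc n} (ha : a ∈ K) (hu : φ u = 1)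
    {s t : ℝ} (hs : distφ φ K (a + s • u) = s) (ht : 0 ≤ t) (hts : t ≤ s) :
    distφ φ K (a + t • u) = t := by
  have hle : distφ φ K (a + t • u) ≤ t := by
    simpa [hφ.2.1, abs_of_nonneg ht, hu] using distφ_le hφ (a + t • u) ha
  have hge := distφ_le_add hφ ⟨a, ha⟩ (a + s • u) (a + t • u)
  rw [add_sub_add_left_eq_sub, ← sub_smul, hφ.2.1, abs_of_nonneg (by linarith), hu, hs] at hge
  linarith

lemma distφ_eq_of_ofReal_lt_reachφ (hφ : IsNorm φ) {a u : Euc n} (ha : a ∈ K) (hu : φ u = 1)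
    {t : ℝ} (ht : 0 ≤ t) (hlt : ENNReal.ofReal t < reachφ φ K (a, u)) :
    distφ φ K (a + t • u) = t := by
  obtain ⟨-, ⟨s, hs, rfl, hds⟩, hts⟩ := lt_sSup_iff.mp hlt
  exact distφ_add_smul_of_le hφ ha hu hds ht ((ENNReal.ofReal_lt_ofReal_iff hs).mp hts).le

lemma ofReal_le_reachφ {a u : Euc n} {t : ℝ} (ht : 0 < t) (h : distφ φ K (a + t • u) = t) :
    ENNReal.ofReal t ≤ reachφ φ K (a, u) :=
  le_sSup ⟨t, ht, rfl, h⟩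

end distφ

theorem stmt5_general {n : ℕ} (φ : Euc n → ℝ) (hφ : IsNorm φ) (K : Set (Euc n))
    (a u : ℕ → Euc n) (a₀ u₀ : Euc n)
    (hmem : ∀ i, (a i, u i) ∈ normalBundle φ K)
    (hca : Tendsto a atTop (𝓝 a₀)) (hcu : Tendsto u atTop (𝓝 u₀)) :
    Filter.limsup (fun i => reachφ φ K (a i, u i)) atTop ≤ reachφ φ K (a₀, u₀) := by
  refine le_of_forall_lt_imp_le_of_dense fun c hc => ?_
  obtain ⟨t, ht, rfl⟩ : ∃ t, 0 ≤ t ∧ ENNReal.ofReal t = c :=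
    ⟨c.toReal, ENNReal.toReal_nonneg, ENNReal.ofReal_toReal (hc.trans_le le_top).ne⟩
  rcases ht.eq_or_lt with rfl | ht_pos
  · simp
  have hfreq : ∃ᶠ i in atTop, distφ φ K (a i + t • u i) = t :=
    (frequently_lt_of_lt_limsup isCobounded_le_of_bot hc).mono fun i hi =>
      distφ_eq_of_ofReal_lt_reachφ hφ (hmem i).1 (hmem i).2.1 ht hi
  have hlim : Tendsto (fun i => distφ φ K (a i + t • u i)) atTop
      (𝓝 (distφ φ K (a₀ + t • u₀))) :=
    ((continuous_distφ hφ K).tendsto _).comp (hca.add (hcu.const_smul t))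
  exact ofReal_le_reachφ ht_pos (tendsto_nhds_unique_of_frequently_eq hlim tendsto_const_nhds hfreq)

theorem stmt5 {n : ℕ} (φ : Euc n → ℝ) (hφ : IsNorm φ) (K : Set (Euc n))
    (hK : IsClosed K) (a u : ℕ → Euc n) (a₀ u₀ : Euc n)
    (hmem : ∀ i, (a i, u i) ∈ normalBundle φ K)
    (h0 : (a₀, u₀) ∈ normalBundle φ K)
    (hca : Tendsto a atTop (𝓝 a₀)) (hcu : Tendsto u atTop (𝓝 u₀)) :
    Filter.limsup (fun i => reachφ φ K (a i, u i)) atTop ≤ reachφ φ K (a₀, u₀) :=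
  stmt5_general φ hφ K a u a₀ u₀ hmem hca hcu
end
end

section
/- Suppose a ∈ A ⊆ ℝⁿ, C ∈ ℝ, f : ℝⁿ → 𝒫(ℝⁿ) is a multivalued map such that f(b) is a singleton for each b ∈ A, the restriction f|A is differentiable at a, the Lebesgue density of ℝⁿ \ A at a is 0, and |f(b) − y| ≤ C |b − c| whenever b ∈ A, c ∈ ℝⁿ, y ∈ f(c). Then f is strongly differentiable at a: there is a unique linear map L with the property that for every ε > 0 there is δ > 0 such that |y − f(a) − L(x − a)| ≤ ε |x − a| whenever |x − a| ≤ δ and y ∈ f(x). -/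
/-!
If the complement of `A` has density zero at `a`, then no ball of radius comparable to `‖x - a‖`
near `a` can miss `A`: every `x` close to `a` lies within `θ‖x - a‖` of some `b ∈ A`. Comparing
`f x` with `f b` by the Lipschitz bound, and `f b` with `fa + L (b - a)` by differentiability
along `A`, gives the estimate at `x`. Two derivatives along `A` differ by a linear map that is
small on `A - a`; the same argument applied to that map makes it small everywhere, so it is zero.
-/

open Set Filter Metric MeasureTheory Topology ENNReal

noncomputable section

section Nonporous

variable {E : Type*} [NormedAddCommGroup E]

def NonporousAt (A : Set E) (a : E) : Prop :=
  ∀ θ > (0 : ℝ), ∃ δ > (0 : ℝ), ∀ x, ‖x - a‖ ≤ δ → ∃ b ∈ A, ‖b - x‖ ≤ θ * ‖x - a‖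

variable [NormedSpace ℝ E] [MeasurableSpace E] [BorelSpace E] [FiniteDimensional ℝ E]
  (μ : Measure E) [μ.IsAddHaarMeasure] {A : Set E} {a : E}

theorem eventually_inter_ball_nonempty_of_tendsto_density
    (hdens : Tendsto (fun r : ℝ => μ (ball a r \ A) / μ (ball a r)) (𝓝[>] 0) (𝓝 0))
    {s : ℝ} (hs : 0 < s) :
    ∀ᶠ R in 𝓝[>] 0, ∀ c ∈ closedBall a ((1 - s) * R), (A ∩ ball c (s * R)).Nonempty := by
  have hk : (0 : ℝ≥0∞) < ENNReal.ofReal (s ^ Module.finrank ℝ E) :=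
    ENNReal.ofReal_pos.2 (pow_pos hs _)
  filter_upwards [hdens.eventually (gt_mem_nhds hk), self_mem_nhdsWithin] with R hR hR0 c hc
  by_contra hempty
  have hsub : ball c (s * R) ⊆ ball a R \ A := fun y hy =>
    ⟨calc dist y a ≤ dist y c + dist c a := dist_triangle y c a
        _ < s * R + (1 - s) * R := add_lt_add_of_lt_of_le hy hc
        _ = R := by ring,
      fun hyA => hempty ⟨y, hyA, hy⟩⟩
  have hvol : μ (ball c (s * R)) = ENNReal.ofReal (s ^ Module.finrank ℝ E) * μ (ball a R) := by
    rw [Measure.addHaar_ball_mul_of_pos μ c hs, Measure.addHaar_ball_center μ a]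
  rw [ENNReal.div_lt_iff (Or.inl (measure_ball_pos μ a hR0).ne') (Or.inl measure_ball_lt_top.ne),
    ← hvol] at hR
  exact (measure_mono hsub).not_gt hR

theorem nonporousAt_of_tendsto_density (ha : a ∈ A)
    (hdens : Tendsto (fun r : ℝ => μ (ball a r \ A) / μ (ball a r)) (𝓝[>] 0) (𝓝 0)) :
    NonporousAt A a := by
  intro θ hθ
  obtain ⟨R₀, hR₀, hnonempty⟩ := (nhdsGT_basis (0 : ℝ)).eventually_iff.1
    (eventually_inter_ball_nonempty_of_tendsto_density μ hdens (s := θ / (1 + θ)) (by positivity))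
  refine ⟨R₀ / (2 * (1 + θ)), by positivity, fun x hx => ?_⟩
  rcases eq_or_ne x a with rfl | hxa
  · exact ⟨x, ha, by simp⟩
  set r := ‖x - a‖
  have hr : 0 < r := norm_pos_iff.2 (sub_ne_zero.2 hxa)
  have hR : (1 + θ) * r ∈ Ioo 0 R₀ := by
    refine ⟨by positivity, ?_⟩
    rw [le_div_iff₀ (by positivity)] at hx
    nlinarith
  have hθ' : 1 + θ ≠ 0 := by positivity
  have hcenter : (1 - θ / (1 + θ)) * ((1 + θ) * r) = r := by field_simp; ring
  have hradius : θ / (1 + θ) * ((1 + θ) * r) = θ * r := by field_simp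
  obtain ⟨b, hbA, hb⟩ := hnonempty hR x (by rw [hcenter, mem_closedBall, dist_eq_norm])
  rw [hradius, mem_ball, dist_eq_norm] at hb
  exact ⟨b, hbA, hb.le⟩

end Nonporous

section SetDeriv

variable {𝕜 E F : Type*} [NontriviallyNormedField 𝕜] [NormedAddCommGroup E] [NormedSpace 𝕜 E]
  [NormedAddCommGroup F] [NormedSpace 𝕜 F]

def HasSetDerivWithinAt (f : E → Set F) (fa : F) (L : E →L[𝕜] F) (A : Set E) (a : E) : Prop :=
  ∀ ε > (0 : ℝ), ∃ δ > (0 : ℝ), ∀ x ∈ A, ‖x - a‖ ≤ δ → ∀ y ∈ f x,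
    ‖y - fa - L (x - a)‖ ≤ ε * ‖x - a‖

variable {f : E → Set F} {fa : F} {L L' : E →L[𝕜] F} {A B : Set E} {a : E}

theorem hasSetDerivWithinAt_univ :
    HasSetDerivWithinAt f fa L univ a ↔ ∀ ε > (0 : ℝ), ∃ δ > (0 : ℝ), ∀ x : E,
      ‖x - a‖ ≤ δ → ∀ y ∈ f x, ‖y - fa - L (x - a)‖ ≤ ε * ‖x - a‖ := by
  simp [HasSetDerivWithinAt]

theorem HasSetDerivWithinAt.mono (h : HasSetDerivWithinAt f fa L B a) (hAB : A ⊆ B) :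
    HasSetDerivWithinAt f fa L A a := fun ε hε =>
  let ⟨δ, hδ, hf⟩ := h ε hε
  ⟨δ, hδ, fun x hx => hf x (hAB hx)⟩

theorem HasSetDerivWithinAt.univ_of_nonporousAt {C : ℝ} (hf : HasSetDerivWithinAt f fa L A a)
    (hA : NonporousAt A a) (hne : ∀ b ∈ A, (f b).Nonempty)
    (hlip : ∀ b ∈ A, ∀ z ∈ f b, ∀ c, ∀ y ∈ f c, ‖z - y‖ ≤ C * ‖b - c‖) :
    HasSetDerivWithinAt f fa L univ a := by
  intro ε hε
  set θ := min 1 (ε / (2 * (|C| + ‖L‖ + 1)))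
  have hθ0 : 0 < θ := lt_min one_pos (by positivity)
  have hθ1 : θ ≤ 1 := min_le_left _ _
  have hθε : θ * (|C| + ‖L‖) ≤ ε / 2 := by
    have : θ * (2 * (|C| + ‖L‖ + 1)) ≤ ε := (le_div_iff₀ (by positivity)).1 (min_le_right _ _)
    nlinarith [norm_nonneg L, abs_nonneg C]
  obtain ⟨δ₁, hδ₁, hnear⟩ := hA θ hθ0
  obtain ⟨δ₂, hδ₂, hfA⟩ := hf (ε / 4) (by positivity)
  refine ⟨min δ₁ (δ₂ / 2), by positivity, fun x _ hx y hy => ?_⟩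
  obtain ⟨b, hbA, hbx⟩ := hnear x (hx.trans (min_le_left _ _))
  obtain ⟨z, hz⟩ := hne b hbA
  have hba : ‖b - a‖ ≤ 2 * ‖x - a‖ := by
    linarith [norm_sub_le_norm_sub_add_norm_sub b x a,
      mul_le_of_le_one_left (norm_nonneg (x - a)) hθ1]
  have hzy : ‖y - z‖ ≤ |C| * (θ * ‖x - a‖) := by
    rw [norm_sub_rev]
    calc ‖z - y‖ ≤ C * ‖b - x‖ := hlip b hbA z hz x y hy
      _ ≤ |C| * (θ * ‖x - a‖) := mul_le_mul (le_abs_self C) hbx (norm_nonneg _) (abs_nonneg C)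
  have hz : ‖z - fa - L (b - a)‖ ≤ ε / 4 * (2 * ‖x - a‖) :=
    (hfA b hbA (by linarith [min_le_right δ₁ (δ₂ / 2)]) z hz).trans
      (mul_le_mul_of_nonneg_left hba (by positivity))
  have hL : ‖L (b - a) - L (x - a)‖ ≤ ‖L‖ * (θ * ‖x - a‖) := by
    rw [← map_sub, sub_sub_sub_cancel_right]
    exact L.le_of_opNorm_le_of_le le_rfl hbx
  calc ‖y - fa - L (x - a)‖
      = ‖(y - z) + (z - fa - L (b - a)) + (L (b - a) - L (x - a))‖ := by congr 1; abel
    _ ≤ ‖y - z‖ + ‖z - fa - L (b - a)‖ + ‖L (b - a) - L (x - a)‖ := norm_add₃_le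
    _ ≤ |C| * (θ * ‖x - a‖) + ε / 4 * (2 * ‖x - a‖) + ‖L‖ * (θ * ‖x - a‖) := by gcongr
    _ = θ * (|C| + ‖L‖) * ‖x - a‖ + ε / 2 * ‖x - a‖ := by ring
    _ ≤ ε * ‖x - a‖ := by nlinarith [norm_nonneg (x - a)]

theorem HasSetDerivWithinAt.unique (hL : HasSetDerivWithinAt f fa L A a)
    (hL' : HasSetDerivWithinAt f fa L' A a) (hA : NonporousAt A a)
    (hne : ∀ b ∈ A, (f b).Nonempty) : L = L' := by
  set D := L' - L
  have hDA : HasSetDerivWithinAt (fun x => {D (x - a)}) 0 (0 : E →L[𝕜] F) A a := by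
    intro ε hε
    obtain ⟨δ, hδ, hfL⟩ := hL (ε / 2) (by positivity)
    obtain ⟨δ', hδ', hfL'⟩ := hL' (ε / 2) (by positivity)
    refine ⟨min δ δ', by positivity, fun x hx hxa y hy => ?_⟩
    obtain ⟨z, hz⟩ := hne x hx
    rw [mem_singleton_iff.1 hy]
    calc ‖D (x - a) - 0 - (0 : E →L[𝕜] F) (x - a)‖
        = ‖(z - fa - L (x - a)) - (z - fa - L' (x - a))‖ := by
          simp only [D, sub_apply, zero_apply, sub_zero]
          congr 1; abel
      _ ≤ ε / 2 * ‖x - a‖ + ε / 2 * ‖x - a‖ :=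
          (norm_sub_le _ _).trans (add_le_add (hfL x hx (hxa.trans (min_le_left _ _)) z hz)
            (hfL' x hx (hxa.trans (min_le_right _ _)) z hz))
      _ = ε * ‖x - a‖ := by ring
  have hD := hDA.univ_of_nonporousAt hA (fun _ _ => singleton_nonempty _) (C := ‖D‖) <| by
    rintro b - _ rfl c _ rfl
    rw [← map_sub, sub_sub_sub_cancel_right]
    exact D.le_opNorm _
  refine (sub_eq_zero.1 (norm_le_zero_iff.1 (le_of_forall_pos_le_add fun ε hε => ?_))).symm
  obtain ⟨δ, hδ, hsmall⟩ := hD ε hε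
  rw [zero_add]
  refine D.opNorm_le_of_ball hδ hε.le fun h hh => ?_
  simpa using hsmall (a + h) trivial (by simpa using (mem_ball_zero_iff.1 hh).le) (D h) (by simp)

end SetDeriv

theorem stmt9_general {n : ℕ} (A : Set (Euc n)) (a : Euc n) (ha : a ∈ A) (C : ℝ)
    (f : Euc n → Set (Euc n)) (fa : Euc n)
    (hsing : ∀ b ∈ A, ∃ y, f b = {y})
    (hdens : Tendsto (fun r : ℝ => volume (Metric.ball a r \ A) / volume (Metric.ball a r))
      (𝓝[>] 0) (𝓝 0))
    (hdiff : ∃ L : Euc n →L[ℝ] Euc n, ∀ ε > (0 : ℝ), ∃ δ > (0 : ℝ), ∀ x ∈ A,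
      ‖x - a‖ ≤ δ → ∀ y ∈ f x, ‖y - fa - L (x - a)‖ ≤ ε * ‖x - a‖)
    (hlip : ∀ b ∈ A, ∀ z ∈ f b, ∀ c : Euc n, ∀ y ∈ f c, ‖z - y‖ ≤ C * ‖b - c‖) :
    ∃! L : Euc n →L[ℝ] Euc n, ∀ ε > (0 : ℝ), ∃ δ > (0 : ℝ), ∀ x : Euc n,
      ‖x - a‖ ≤ δ → ∀ y ∈ f x, ‖y - fa - L (x - a)‖ ≤ ε * ‖x - a‖ := by
  obtain ⟨L, hL⟩ := hdiff
  have hA : NonporousAt A a := nonporousAt_of_tendsto_density volume ha hdens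
  have hne : ∀ b ∈ A, (f b).Nonempty := fun b hb => by
    obtain ⟨y, hy⟩ := hsing b hb
    exact hy ▸ singleton_nonempty y
  simp_rw [← hasSetDerivWithinAt_univ (𝕜 := ℝ)]
  exact ⟨L, HasSetDerivWithinAt.univ_of_nonporousAt hL hA hne hlip,
    fun L' hL' => (HasSetDerivWithinAt.unique hL (hL'.mono (subset_univ A)) hA hne).symm⟩

theorem stmt9 {n : ℕ} (A : Set (Euc n)) (a : Euc n) (ha : a ∈ A) (C : ℝ)
    (f : Euc n → Set (Euc n)) (fa : Euc n) (hfa : f a = {fa})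
    (hsing : ∀ b ∈ A, ∃ y, f b = {y})
    (hdens : Tendsto (fun r : ℝ => volume (Metric.ball a r \ A) / volume (Metric.ball a r))
      (𝓝[>] 0) (𝓝 0))
    (hdiff : ∃ L : Euc n →L[ℝ] Euc n, ∀ ε > (0 : ℝ), ∃ δ > (0 : ℝ), ∀ x ∈ A,
      ‖x - a‖ ≤ δ → ∀ y ∈ f x, ‖y - fa - L (x - a)‖ ≤ ε * ‖x - a‖)
    (hlip : ∀ b ∈ A, ∀ z ∈ f b, ∀ c : Euc n, ∀ y ∈ f c, ‖z - y‖ ≤ C * ‖b - c‖) :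
    ∃! L : Euc n →L[ℝ] Euc n, ∀ ε > (0 : ℝ), ∃ δ > (0 : ℝ), ∀ x : Euc n,
      ‖x - a‖ ≤ δ → ∀ y ∈ f x, ‖y - fa - L (x - a)‖ ≤ ε * ‖x - a‖ :=
  stmt9_general A a ha C f fa hsing hdens hdiff hlip
end
end

section
/- Let φ be a strictly convex norm of class C¹ away from 0 on ℝⁿ, S = {x : φ(x) = 1}, ξ(x) = x/φ(x), and π(η) = Dξ(η) for η ∈ S. Fix 0 < ε < 1 and let R be the supremum of r ∈ (0,1) such that ‖π(η) − π(ζ)‖_φ ≤ 1 − ε whenever η, ζ ∈ S with φ(η − ζ) ≤ r. Then for every η ∈ S the map π(η) restricted to S ∩ {ζ : φ(ζ − η) ≤ R} is injective. -/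
open Set Filter Metric MeasureTheory Topology ENNReal

noncomputable section

/-! Since `π η v = v - Dφ(η) v • η`, two points of `S` with the same image under `π η` differ by
a multiple of `η`, say `ζ₁ = ζ₂ + t • η` with `t > 0`. By convexity, `D = Dφ(ζ₂)` is a supporting
functional: `D ≤ φ`, `D ζ₂ = 1`, and `D η ≤ 0` because `φ (ζ₂ + t • η) = φ ζ₂`. Hence
`φ (ζ₂ - η) ≥ D (ζ₂ - η) ≥ 1`, and equality would give `φ (ζ₂ + (ζ₂ - η)) = 2`, an equality case of
the triangle inequality excluded by strict convexity. So `π η` is injective on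
`S ∩ {ζ | φ (ζ - η) ≤ 1}`, which contains the set in question because `R ≤ 1`. -/

theorem ConvexOn.apply_sub_le_of_hasFDerivAt {E : Type*} [NormedAddCommGroup E] [NormedSpace ℝ E]
    {f : E → ℝ} (hf : ConvexOn ℝ univ f) {D : E →L[ℝ] ℝ} {x : E} (hD : HasFDerivAt f D x)
    (y : E) : D (y - x) ≤ f y - f x := by
  have hg : HasDerivAt (f ∘ (AffineMap.lineMap x y : ℝ → E)) (D (y - x)) 0 := by
    have hD' : HasFDerivAt f D (AffineMap.lineMap (k := ℝ) x y 0) := by simpa using hD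
    exact hD'.comp_hasDerivAt 0 AffineMap.hasDerivAt_lineMap
  have := (hf.comp_affineMap (AffineMap.lineMap x y)).le_slope_of_hasDerivAt
    (mem_univ 0) (mem_univ 1) one_pos hg
  simpa [slope_def_field] using this

theorem hasFDerivAt_inv_smul_self {E : Type*} [NormedAddCommGroup E] [NormedSpace ℝ E]
    {f : E → ℝ} {D : E →L[ℝ] ℝ} {x : E} (hD : HasFDerivAt f D x) (hx : f x = 1) :
    HasFDerivAt (fun y => (f y)⁻¹ • y) (ContinuousLinearMap.id ℝ E - D.smulRight x) x := by
  have hinv := (hasFDerivAt_inv (𝕜 := ℝ) (by simp [hx] : f x ≠ 0)).comp x hD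
  have h : HasFDerivAt (fun y => (f y)⁻¹ • y) _ x := hinv.smul (hasFDerivAt_id x)
  refine h.congr_fderiv (ContinuousLinearMap.ext fun v => ?_)
  simp [hx, sub_eq_add_neg]

section

variable {n : ℕ} {φ : Euc n → ℝ}

theorem IsNorm.convexOn (hφ : IsNorm φ) : ConvexOn ℝ univ φ := by
  obtain ⟨-, hsmul, htri⟩ := hφ
  refine ⟨convex_univ, fun x _ y _ a b ha hb _ => ?_⟩
  calc φ (a • x + b • y) ≤ φ (a • x) + φ (b • y) := htri _ _
    _ = a • φ x + b • φ y := by simp [hsmul, abs_of_nonneg ha, abs_of_nonneg hb]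

theorem IsNorm.hasFDerivAt_apply_le (hφ : IsNorm φ) {D : Euc n →L[ℝ] ℝ} {ζ : Euc n}
    (hD : HasFDerivAt φ D ζ) (w : Euc n) : D w ≤ φ w := by
  have := hφ.convexOn.apply_sub_le_of_hasFDerivAt hD (ζ + w)
  rw [add_sub_cancel_left] at this
  linarith [hφ.2.2 ζ w]

theorem IsNorm.hasFDerivAt_apply_self (hφ : IsNorm φ) {D : Euc n →L[ℝ] ℝ} {ζ : Euc n}
    (hD : HasFDerivAt φ D ζ) : D ζ = φ ζ := by
  have hzero : φ 0 = 0 := (hφ.1 0).2 rfl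
  have := hφ.convexOn.apply_sub_le_of_hasFDerivAt hD 0
  rw [zero_sub, map_neg, hzero] at this
  linarith [hφ.hasFDerivAt_apply_le hD ζ]

theorem StrictlyConvexNorm.one_lt_apply_sub (hφ : StrictlyConvexNorm φ) {D : Euc n →L[ℝ] ℝ}
    {ζ η : Euc n} {t : ℝ} (hD : HasFDerivAt φ D ζ) (hζ : φ ζ = 1) (hη : φ η = 1) (ht : 0 < t)
    (hζt : φ (ζ + t • η) = 1) : 1 < φ (ζ - η) := by
  obtain ⟨hnorm, hstrict⟩ := hφ
  by_contra! hle
  have hDη : D η ≤ 0 := by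
    have := hnorm.convexOn.apply_sub_le_of_hasFDerivAt hD (ζ + t • η)
    rw [add_sub_cancel_left, map_smul, smul_eq_mul, hζt, hζ, sub_self] at this
    exact nonpos_of_mul_nonpos_right this ht
  have hDζ := hnorm.hasFDerivAt_apply_self hD
  have hsub := hnorm.hasFDerivAt_apply_le hD (ζ - η)
  rw [map_sub, hDζ, hζ] at hsub
  have hφsub : φ (ζ - η) = 1 := by linarith
  have hadd : φ (ζ + (ζ - η)) = φ ζ + φ (ζ - η) := by
    have := hnorm.hasFDerivAt_apply_le hD (ζ + (ζ - η))
    rw [map_add, map_sub, hDζ] at this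
    linarith [hnorm.2.2 ζ (ζ - η)]
  have hparallel := hstrict ζ (ζ - η) hadd
  rw [hζ, hφsub, one_smul, one_smul] at hparallel
  have hη0 : η = 0 := sub_eq_self.mp hparallel.symm
  rw [hη0, (hnorm.1 0).2 rfl] at hη
  exact zero_ne_one hη

theorem StrictlyConvexNorm.eq_of_eq_add_smul (hφ : StrictlyConvexNorm φ)
    (hdiff : ∀ ζ, φ ζ = 1 → DifferentiableAt ℝ φ ζ) {η ζ₁ ζ₂ : Euc n} {t : ℝ} (hη : φ η = 1)
    (h₁ : φ ζ₁ = 1 ∧ φ (ζ₁ - η) ≤ 1) (h₂ : φ ζ₂ = 1 ∧ φ (ζ₂ - η) ≤ 1)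
    (h : ζ₁ = ζ₂ + t • η) : ζ₁ = ζ₂ := by
  wlog ht : 0 ≤ t generalizing ζ₁ ζ₂ t
  · refine (this h₂ h₁ (t := -t) ?_ (by linarith)).symm
    rw [h, neg_smul, add_neg_cancel_right]
  rcases ht.eq_or_lt with rfl | ht
  · simpa using h
  · have := hφ.one_lt_apply_sub (hdiff ζ₂ h₂.1).hasFDerivAt h₂.1 hη ht (h ▸ h₁.1)
    linarith [h₂.2]

theorem StrictlyConvexNorm.injOn_id_sub_smulRight (hφ : StrictlyConvexNorm φ)
    (hdiff : ∀ ζ, φ ζ = 1 → DifferentiableAt ℝ φ ζ) {η : Euc n} (hη : φ η = 1)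
    (D : Euc n →L[ℝ] ℝ) :
    InjOn (ContinuousLinearMap.id ℝ (Euc n) - D.smulRight η) {ζ | φ ζ = 1 ∧ φ (ζ - η) ≤ 1} := by
  intro ζ₁ h₁ ζ₂ h₂ h
  simp only [sub_apply, ContinuousLinearMap.id_apply,
    ContinuousLinearMap.smulRight_apply] at h
  refine hφ.eq_of_eq_add_smul hdiff hη h₁ h₂ (t := D ζ₁ - D ζ₂) ?_
  rw [sub_smul, ← sub_eq_sub_iff_sub_eq_sub.mp h]
  abel


end

theorem stmt12_general {n : ℕ} (φ : Euc n → ℝ) (hφ : StrictlyConvexNorm φ)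
    (hsm : ContDiffOn ℝ 1 φ {(0 : Euc n)}ᶜ)
    (ξ : Euc n → Euc n) (hξ : ∀ x, ξ x = (φ x)⁻¹ • x)
    (π : Euc n → (Euc n →L[ℝ] Euc n)) (hπ : ∀ η : Euc n, π η = fderiv ℝ ξ η)
    (opφ : (Euc n →L[ℝ] Euc n) → ℝ)
    (ε : ℝ) (R : ℝ)
    (hR : R = sSup {r : ℝ | 0 < r ∧ r < 1 ∧ ∀ η ζ : Euc n, φ η = 1 → φ ζ = 1 →
      φ (η - ζ) ≤ r → opφ (π η - π ζ) ≤ 1 - ε}) :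
    ∀ η : Euc n, φ η = 1 →
      Set.InjOn (π η) {ζ : Euc n | φ ζ = 1 ∧ φ (ζ - η) ≤ R} := by
  intro η hη
  have hdiff : ∀ ζ, φ ζ = 1 → DifferentiableAt ℝ φ ζ := fun ζ hζ =>
    have hζ0 : ζ ≠ 0 := by rintro rfl; simp [(hφ.1.1 0).2 rfl] at hζ
    (hsm.differentiableOn one_ne_zero ζ hζ0).differentiableAt
      (isOpen_compl_singleton.mem_nhds hζ0)
  have hR1 : R ≤ 1 := hR ▸ Real.sSup_le (fun r hr => hr.2.1.le) zero_le_one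
  have hπη : π η = ContinuousLinearMap.id ℝ (Euc n) - (fderiv ℝ φ η).smulRight η := by
    rw [hπ, funext hξ]
    exact (hasFDerivAt_inv_smul_self (hdiff η hη).hasFDerivAt hη).fderiv
  rw [hπη]
  refine (hφ.injOn_id_sub_smulRight hdiff hη _).mono fun ζ hζ => ?_
  exact ⟨hζ.1, hζ.2.trans hR1⟩

theorem stmt12 {n : ℕ} (φ : Euc n → ℝ) (hφ : StrictlyConvexNorm φ)
    (hsm : ContDiffOn ℝ 1 φ {(0 : Euc n)}ᶜ)
    (ξ : Euc n → Euc n) (hξ : ∀ x, ξ x = (φ x)⁻¹ • x)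
    (π : Euc n → (Euc n →L[ℝ] Euc n)) (hπ : ∀ η : Euc n, π η = fderiv ℝ ξ η)
    (opφ : (Euc n →L[ℝ] Euc n) → ℝ)
    (hop : ∀ L : Euc n →L[ℝ] Euc n, opφ L = sSup {r | ∃ x : Euc n, φ x ≤ 1 ∧ r = φ (L x)})
    (ε : ℝ) (hε0 : 0 < ε) (hε1 : ε < 1) (R : ℝ)
    (hR : R = sSup {r : ℝ | 0 < r ∧ r < 1 ∧ ∀ η ζ : Euc n, φ η = 1 → φ ζ = 1 →
      φ (η - ζ) ≤ r → opφ (π η - π ζ) ≤ 1 - ε}) :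
    ∀ η : Euc n, φ η = 1 →
      Set.InjOn (π η) {ζ : Euc n | φ ζ = 1 ∧ φ (ζ - η) ≤ R} :=
  stmt12_general φ hφ hsm ξ hξ π hπ opφ ε R hR
end
end

section
/- Let f : ℝⁿ → ℝ̄ be an arbitrary function and define its approximate lower limit f̲(x) = ap liminf_{y→x} f(y) = sup{t ∈ ℝ : the Lebesgue density of {y : f(y) < t} at x is 0}. Then f̲ is a Borel measurable function. -/
open Set Filter Metric MeasureTheory Topology ENNReal

noncomputable section

def densityZeroAt {n : ℕ} (A : Set (Euc n)) (x : Euc n) : Prop :=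
  Tendsto (fun r : ℝ => volume (A ∩ Metric.ball x r) / volume (Metric.ball x r))
    (𝓝[>] 0) (𝓝 0)

/-!
For `a : EReal`, the superlevel set `{f̲ > a}` is the union over rationals `q > a` of the sets
of points where `{f < q}` has density zero, so it suffices that each such set is measurable.
Replacing `{f < q}` by a measurable hull does not change the densities, and for a measurable
set the density ratio at a fixed radius is a measurable function of the centre. Finally, since
Lebesgue measure is doubling, density zero can be tested along the radii `2⁻¹ ^ k`, a countable
family.
-/

open Module

/-- `densityZeroAt A x` unfolds to `ballDensity volume A x r → 0` as `r → 0⁺`. -/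
def ballDensity {α : Type*} [PseudoMetricSpace α] [MeasurableSpace α] (μ : Measure α)
    (A : Set α) (x : α) (r : ℝ) : ℝ≥0∞ :=
  μ (A ∩ ball x r) / μ (ball x r)

section BallDensity

variable {α : Type*} [PseudoMetricSpace α] [MeasurableSpace α] {μ : Measure α}

lemma ballDensity_mono {A B : Set α} (h : A ⊆ B) (x : α) (r : ℝ) :
    ballDensity μ A x r ≤ ballDensity μ B x r :=
  ENNReal.div_le_div_right (measure_mono (inter_subset_inter_left _ h)) _

lemma ballDensity_toMeasurable [OpensMeasurableSpace α] [SFinite μ] (A : Set α) (x : α) :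
    ballDensity μ (toMeasurable μ A) x = ballDensity μ A x := by
  ext r
  rw [ballDensity, ballDensity, Measure.measure_toMeasurable_inter_of_sFinite measurableSet_ball]

lemma measurable_measure_inter_ball [SecondCountableTopology α] [OpensMeasurableSpace α]
    [SFinite μ] {A : Set α} (hA : MeasurableSet A) (r : ℝ) :
    Measurable fun x => μ (A ∩ ball x r) := by
  have hS : MeasurableSet {p : α × α | p.2 ∈ A ∧ dist p.2 p.1 < r} :=
    (hA.preimage measurable_snd).inter
      (isOpen_lt (continuous_snd.dist continuous_fst) continuous_const).measurableSet
  exact measurable_measure_prodMk_left hS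

end BallDensity

lemma tendsto_nhdsGT_zero_of_tendsto_pow {g : ℝ → ℝ≥0∞} {c : ℝ} {C : ℝ≥0∞}
    (hc0 : 0 < c) (hc1 : c < 1) (hC : C ≠ ∞)
    (hg : ∀ (k : ℕ) (r : ℝ), c ^ (k + 1) < r → r ≤ c ^ k → g r ≤ C * g (c ^ k))
    (h : Tendsto (fun k : ℕ => g (c ^ k)) atTop (𝓝 0)) :
    Tendsto g (𝓝[>] 0) (𝓝 0) := by
  have hCg : Tendsto (fun k : ℕ => C * g (c ^ k)) atTop (𝓝 0) := by
    simpa using ENNReal.Tendsto.const_mul h (Or.inr hC)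
  rw [ENNReal.tendsto_nhds_zero] at hCg ⊢
  intro ε hε
  obtain ⟨N, hN⟩ := eventually_atTop.1 (hCg ε hε)
  filter_upwards [Ioo_mem_nhdsGT (pow_pos hc0 N)] with r ⟨hr0, hrN⟩
  obtain ⟨k, hk1, hk⟩ := exists_nat_pow_near_of_lt_one hr0
    (hrN.le.trans (pow_le_one₀ hc0.le hc1.le)) hc0 hc1
  have hNk : N < k + 1 := (pow_lt_pow_iff_right_of_lt_one₀ hc0 hc1).1 (hk1.trans hrN)
  exact (hg k r hk1 hk).trans (hN k (Nat.lt_succ_iff.1 hNk))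

section AddHaar

variable {E : Type*} [NormedAddCommGroup E] [NormedSpace ℝ E] [MeasurableSpace E]
  [BorelSpace E] [FiniteDimensional ℝ E] (μ : Measure E) [μ.IsAddHaarMeasure]

lemma ballDensity_le_mul_ballDensity (A : Set E) (x : E) {r s : ℝ} (hr : 0 < r) (hrs : r ≤ s) :
    ballDensity μ A x r ≤ ENNReal.ofReal ((s / r) ^ finrank ℝ E) * ballDensity μ A x s := by
  have hs : 0 < s := hr.trans_le hrs
  set c := ENNReal.ofReal ((s / r) ^ finrank ℝ E)
  have hc : c ≠ 0 := (ENNReal.ofReal_pos.2 (by positivity)).ne'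
  have hball : μ (ball x s) = c * μ (ball x r) := by
    rw [Measure.addHaar_ball_of_pos μ x hr, Measure.addHaar_ball_of_pos μ x hs,
      ← mul_assoc, ← ENNReal.ofReal_mul (by positivity), ← mul_pow, div_mul_cancel₀ _ hr.ne']
  calc ballDensity μ A x r ≤ μ (A ∩ ball x s) / μ (ball x r) :=
        ENNReal.div_le_div_right (measure_mono (inter_subset_inter_right _ (ball_subset_ball hrs))) _
    _ = c * ballDensity μ A x s := by
        rw [ballDensity, hball, ← mul_div_assoc, ENNReal.mul_div_mul_left _ _ hc ofReal_ne_top]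

lemma measurable_ballDensity {A : Set E} (hA : MeasurableSet A) (r : ℝ) :
    Measurable fun x => ballDensity μ A x r := by
  simp_rw [ballDensity, Measure.addHaar_ball_center μ _ r]
  exact (measurable_measure_inter_ball hA r).div_const _

/-- The backward direction uses that the ratio at a radius `r ∈ (2⁻¹ ^ (k + 1), 2⁻¹ ^ k]` is at
most `2 ^ finrank ℝ E` times the one at `2⁻¹ ^ k`. -/
lemma tendsto_ballDensity_nhdsGT_zero_iff (A : Set E) (x : E) :
    Tendsto (ballDensity μ A x) (𝓝[>] 0) (𝓝 0) ↔
      Tendsto (fun k : ℕ => ballDensity μ A x (2⁻¹ ^ k)) atTop (𝓝 0) := by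
  refine ⟨fun h => h.comp (tendsto_pow_atTop_nhdsWithin_zero_of_lt_one (by norm_num) (by norm_num)),
    tendsto_nhdsGT_zero_of_tendsto_pow (C := ENNReal.ofReal (2 ^ finrank ℝ E)) (by norm_num)
      (by norm_num) ofReal_ne_top fun k r hk1 hk => ?_⟩
  have hr : 0 < r := (pow_pos (by norm_num) _).trans hk1
  refine (ballDensity_le_mul_ballDensity μ A x hr hk).trans (mul_le_mul_left ?_ _)
  refine ENNReal.ofReal_le_ofReal (pow_le_pow_left₀ (by positivity) ?_ _)
  rw [pow_succ] at hk1
  rw [div_le_iff₀ hr]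
  linarith

lemma measurableSet_setOf_tendsto_ballDensity (A : Set E) :
    MeasurableSet {x | Tendsto (ballDensity μ A x) (𝓝[>] 0) (𝓝 0)} := by
  simp_rw [← ballDensity_toMeasurable A, tendsto_ballDensity_nhdsGT_zero_iff]
  exact measurableSet_tendsto _ fun k => measurable_ballDensity μ (measurableSet_toMeasurable μ A) _

end AddHaar

lemma measurable_sSup_setOf_mem_of_antitone {X : Type*} [MeasurableSpace X] {S : ℝ → Set X}
    (hS : Antitone S) (hmeas : ∀ q : ℚ, MeasurableSet (S q)) :
    Measurable fun x => sSup {s : EReal | ∃ t : ℝ, s = t ∧ x ∈ S t} := by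
  refine measurable_of_Ioi fun a => ?_
  have hpre : (fun x => sSup {s : EReal | ∃ t : ℝ, s = t ∧ x ∈ S t}) ⁻¹' Ioi a =
      ⋃ q : ℚ, ⋃ _ : a < ((q : ℝ) : EReal), S q := by
    ext x
    simp only [mem_preimage, mem_Ioi, lt_sSup_iff, mem_iUnion]
    constructor
    · rintro ⟨_, ⟨t, rfl, ht⟩, hat⟩
      obtain ⟨q, haq, hqt⟩ := EReal.exists_rat_btwn_of_lt hat
      exact ⟨q, haq, hS (EReal.coe_le_coe_iff.1 hqt.le) ht⟩
    · rintro ⟨q, haq, hq⟩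
      exact ⟨_, ⟨q, rfl, hq⟩, haq⟩
  rw [hpre]
  exact .iUnion fun q => .iUnion fun _ => hmeas q

theorem stmt16 {n : ℕ} (f : Euc n → EReal) :
    Measurable (fun x : Euc n => sSup {s : EReal | ∃ t : ℝ, s = (t : EReal) ∧
      densityZeroAt {y | f y < (t : EReal)} x}) := by
  have hanti : Antitone fun t : ℝ => {x | densityZeroAt {y | f y < (t : EReal)} x} := by
    intro t t' htt' x hx
    refine tendsto_of_tendsto_of_tendsto_of_le_of_le tendsto_const_nhds hx (fun _ => zero_le)
      fun r => ballDensity_mono (fun y hy => ?_) x r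
    exact lt_of_lt_of_le hy (EReal.coe_le_coe_iff.2 htt')
  exact measurable_sSup_setOf_mem_of_antitone hanti fun q =>
    measurableSet_setOf_tendsto_ballDensity volume _
end
end

section
/- Let T ⊆ ℝⁿ be a hyperplane through 0, α ∈ T, f : T → T^⊥ a function continuous at α, a = α + f(α), and A = {χ + f(χ) : χ ∈ T}. If the tangent cone Tan(A, a) is contained in T, then f is differentiable at α with Df(α) = 0, and Tan(A, a) = T. -/
open Set Filter Metric MeasureTheory Topology ENNReal

noncomputable section

/-!
Let `P` be the orthogonal projection onto `Tᗮ`, so that `P (χ + f χ - a) = f χ - f α` for `χ ∈ T`.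
Since every tangent direction of `A` at `a` lies in `T = ker P`, compactness of the unit ball
shows that `P (y - a) = o(‖y - a‖)` as `y → a` in `A`. Continuity of `f` at `α` allows
`y = χ + f χ`, and as `χ + f χ - a = (χ - α) + (f χ - f α)`, this yields
`f χ - f α = o(‖χ - α‖)`. Hence `χ ↦ χ + f χ` has derivative the identity within `T` at `α`,
so it maps the tangent cone of `T`, which is `T` itself, into `Tan(A, a)`.
-/

open Asymptotics

theorem Asymptotics.IsLittleO.of_add_self_right {α E : Type*} [NormedAddCommGroup E]
    {l : Filter α} {f g : α → E} (h : f =o[l] (g + f)) : f =o[l] g := by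
  have hΘ : (g + f) =Θ[l] g := by
    simpa [Pi.add_def] using h.neg_left.right_isTheta_add
  exact h.trans_isTheta hΘ

section TangentCone

variable {E F : Type*} [NormedAddCommGroup E] [NormedSpace ℝ E] [NormedAddCommGroup F]
  [NormedSpace ℝ F]

theorem Submodule.subset_tangentConeAt (T : Submodule ℝ E) {x : E} (hx : x ∈ T) :
    (T : Set E) ⊆ tangentConeAt ℝ T x := fun v hv => by
  simpa using mem_tangentConeAt_of_segment_subset (T.convex.segment_subset hx (T.add_mem hx hv))

theorem isLittleO_map_sub_of_tangentConeAt_map_eq_zero [ProperSpace E] {s : Set E} {x : E}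
    {P : E →L[ℝ] F} (h : ∀ v ∈ tangentConeAt ℝ s x, P v = 0) :
    (fun y => P (y - x)) =o[𝓝[s] x] (fun y => y - x) := by
  refine isLittleO_iff.2 fun c hc => ?_
  by_contra hbad
  -- A limit `v` of the secant directions `(y - x) / ‖y - x‖` along which `‖P (y - x)‖`
  -- stays above `c ‖y - x‖` is a tangent vector with `c ≤ ‖P v‖`.
  set K := closedBall (0 : E) 1 ∩ {w | c ≤ ‖P w‖}
  have hK : IsCompact K :=
    (isCompact_closedBall 0 1).inter_right (isClosed_le continuous_const P.continuous.norm)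
  set l := 𝓝[s] x ⊓ 𝓟 {y | c * ‖y - x‖ < ‖P (y - x)‖}
  have : l.NeBot := by
    rw [← frequently_iff_neBot]
    simpa [not_eventually] using hbad
  set U := Ultrafilter.of l
  have hUs : (U : Filter E) ≤ 𝓝[s] x := (Ultrafilter.of_le l).trans inf_le_left
  have hdir : ∀ᶠ y in l, ‖y - x‖⁻¹ • (y - x) ∈ K := by
    filter_upwards [mem_inf_of_right (mem_principal_self _)] with y hy
    have hyx : 0 < ‖y - x‖ := by
      by_contra! h0
      simp [norm_le_zero_iff.1 h0] at hy
    refine ⟨by simp [norm_smul, hyx.ne'], ?_⟩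
    rw [mem_ofPred_eq, map_smul, norm_smul, norm_inv, norm_norm, inv_mul_eq_div,
      le_div_iff₀ hyx]
    exact hy.le
  obtain ⟨v, hvK, hv⟩ := hK.ultrafilter_le_nhds (U.map fun y => ‖y - x‖⁻¹ • (y - x))
    (by rw [Ultrafilter.coe_map, le_principal_iff]; exact Ultrafilter.of_le l hdir)
  have hvtan : v ∈ tangentConeAt ℝ s x := by
    refine mem_tangentConeAt_of_seq (U : Filter E) (fun y => ‖y - x‖⁻¹) (fun y => y - x) ?_ ?_ hv
    · exact tendsto_sub_nhds_zero_iff.2 (hUs.trans nhdsWithin_le_nhds)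
    · filter_upwards [hUs self_mem_nhdsWithin] with y hy
      simpa using hy
  have hPv : c ≤ ‖P v‖ := hvK.2
  rw [h v hvtan, norm_zero] at hPv
  linarith

end TangentCone

theorem hasFDerivWithinAt_zero_of_tangentConeAt_image_subset {E : Type*} [NormedAddCommGroup E]
    [InnerProductSpace ℝ E] [FiniteDimensional ℝ E] {T : Submodule ℝ E} {f : E → E} {α : E}
    (hα : α ∈ T) (hfT : ∀ χ ∈ T, f χ ∈ Tᗮ) (hfc : ContinuousWithinAt f T α)
    (htan : tangentConeAt ℝ ((fun χ => χ + f χ) '' T) (α + f α) ⊆ T) :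
    HasFDerivWithinAt f (0 : E →L[ℝ] E) T α := by
  have hP : ∀ χ ∈ T, Tᗮ.starProjection ((χ + f χ) - (α + f α)) = f χ - f α := by
    intro χ hχ
    rw [add_sub_add_comm, map_add, Tᗮ.starProjection_apply_eq_zero_iff.2
      (T.le_orthogonal_orthogonal (T.sub_mem hχ hα)), zero_add,
      Tᗮ.starProjection_eq_self_iff.2 (Tᗮ.sub_mem (hfT χ hχ) (hfT α hα))]
  have hgraph : Tendsto (fun χ => χ + f χ) (𝓝[T] α)
      (𝓝[(fun χ => χ + f χ) '' T] (α + f α)) :=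
    tendsto_nhdsWithin_iff.2 ⟨(continuousWithinAt_id.add hfc).tendsto,
      eventually_mem_nhdsWithin.mono fun χ hχ => mem_image_of_mem _ hχ⟩
  have hker : ∀ v ∈ tangentConeAt ℝ ((fun χ => χ + f χ) '' T) (α + f α),
      Tᗮ.starProjection v = 0 := fun v hv =>
    Tᗮ.starProjection_apply_eq_zero_iff.2 (T.le_orthogonal_orthogonal (htan hv))
  have hflat : (fun χ => f χ - f α) =o[𝓝[T] α] ((fun χ => χ - α) + fun χ => f χ - f α) :=
    ((isLittleO_map_sub_of_tangentConeAt_map_eq_zero hker).comp_tendsto hgraph).congr'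
      (eventually_mem_nhdsWithin.mono hP) (Eventually.of_forall fun χ => add_sub_add_comm _ _ _ _)
  exact .of_isLittleO (by simpa using hflat.of_add_self_right)

theorem stmt17_general {n : ℕ} (T : Submodule ℝ (Euc n))
    (α : Euc n) (hα : α ∈ T) (f : Euc n → Euc n)
    (hfval : ∀ χ ∈ T, f χ ∈ Tᗮ)
    (hfc : ContinuousWithinAt f T α)
    (A : Set (Euc n)) (hA : A = {y | ∃ χ ∈ T, y = χ + f χ})
    (a : Euc n) (ha : a = α + f α)
    (htan : tangentConeAt ℝ A a ⊆ T) :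
    HasFDerivWithinAt f (0 : Euc n →L[ℝ] Euc n) T α ∧ tangentConeAt ℝ A a = T := by
  have hA_image : A = (fun χ => χ + f χ) '' T := by
    rw [hA]; ext y; simp [eq_comm]
  subst hA_image ha
  have hf := hasFDerivWithinAt_zero_of_tangentConeAt_image_subset hα hfval hfc htan
  refine ⟨hf, htan.antisymm fun v hv => ?_⟩
  simpa using ((hasFDerivWithinAt_id α T).add hf).mapsTo_tangent_cone (T.subset_tangentConeAt hα hv)

theorem stmt17 {n : ℕ} (hn : 1 ≤ n) (T : Submodule ℝ (Euc n))
    (hT : Module.finrank ℝ T = n - 1)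
    (α : Euc n) (hα : α ∈ T) (f : Euc n → Euc n)
    (hfval : ∀ χ ∈ T, f χ ∈ Tᗮ)
    (hfc : ContinuousWithinAt f T α)
    (A : Set (Euc n)) (hA : A = {y | ∃ χ ∈ T, y = χ + f χ})
    (a : Euc n) (ha : a = α + f α)
    (htan : tangentConeAt ℝ A a ⊆ T) :
    HasFDerivWithinAt f (0 : Euc n →L[ℝ] Euc n) T α ∧ tangentConeAt ℝ A a = T :=
  stmt17_general T α hα f hfval hfc A hA a ha htan
end
end
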